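/- The function g(h) = (√(e^{4h}+4e^{2h}) − e^{2h})/2 satisfies the differential identity g′(h) = 2·g(h)·(1−g(h))/(2−g(h)) for all h ∈ ℝ. -/

import Mathlib

/-! With `u = e^{2h}`, `g(h)` is the positive root `q` of `q² + u q = u`. Implicit
differentiation in `u` gives `dq/du = (1 - q)/(2q + u)`, and `du/dh = 2u`; eliminating `u`
through `u (1 - q) = q²` turns `2u (1 - q)/(2q + u)` into `2q (1 - q)/(2 - q)`. -/

noncomputable def gH (h : ℝ) : ℝ :=
  (Real.sqrt (Real.exp (4 * h) + 4 * Real.exp (2 * h)) - Real.exp (2 * h)) / 2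

open Real

noncomputable def posRoot (u : ℝ) : ℝ := (√(u ^ 2 + 4 * u) - u) / 2

theorem gH_eq_posRoot (h : ℝ) : gH h = posRoot (exp (2 * h)) := by
  rw [gH, posRoot, ← exp_nat_mul]
  ring_nf

section posRoot

variable {u : ℝ}

theorem posRoot_sq_add_mul (hu : 0 ≤ u) : posRoot u ^ 2 + u * posRoot u = u := by
  have hs := sq_sqrt (by positivity : 0 ≤ u ^ 2 + 4 * u)
  unfold posRoot
  linear_combination hs / 4

theorem posRoot_pos (hu : 0 < u) : 0 < posRoot u := by
  have : u < √(u ^ 2 + 4 * u) := lt_sqrt_of_sq_lt (by linarith)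
  unfold posRoot; linarith

theorem posRoot_lt_one (hu : 0 ≤ u) : posRoot u < 1 := by
  have : √(u ^ 2 + 4 * u) < u + 2 := (sqrt_lt' (by linarith)).2 (by nlinarith)
  unfold posRoot; linarith

theorem hasDerivAt_posRoot (hu : 0 < u) :
    HasDerivAt posRoot ((1 - posRoot u) / (2 * posRoot u + u)) u := by
  have hpos : 0 < u ^ 2 + 4 * u := by positivity
  have hs : HasDerivAt (fun x => √(x ^ 2 + 4 * x)) ((2 * u + 4) / (2 * √(u ^ 2 + 4 * u))) u := by
    simpa using (((hasDerivAt_pow 2 u).add ((hasDerivAt_id u).const_mul 4)).sqrt hpos.ne')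
  refine ((hs.sub (hasDerivAt_id' u)).div_const 2).congr_deriv ?_
  have hsqrt := sqrt_pos.2 hpos
  unfold posRoot
  field_simp
  ring

end posRoot

theorem div_mul_eq_of_sq_add_mul_eq {q u : ℝ} (hq : q ^ 2 + u * q = u)
    (h₁ : 2 * q + u ≠ 0) (h₂ : 2 - q ≠ 0) :
    (1 - q) / (2 * q + u) * (u * 2) = 2 * q * (1 - q) / (2 - q) := by
  rw [div_mul_eq_mul_div, div_eq_div_iff h₁ h₂]
  linear_combination -4 * (1 - q) * hq

/-- `g′(h) = 2·g(h)·(1−g(h))/(2−g(h))` for all `h ∈ ℝ`. -/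
theorem stmt11 (h : ℝ) :
    HasDerivAt gH (2 * gH h * (1 - gH h) / (2 - gH h)) h := by
  have hexp : HasDerivAt (fun x => exp (2 * x)) (exp (2 * h) * 2) h := by
    simpa using ((hasDerivAt_id h).const_mul 2).exp
  have hu := exp_pos (2 * h)
  rw [gH_eq_posRoot, show gH = posRoot ∘ fun x => exp (2 * x) from funext gH_eq_posRoot]
  refine ((hasDerivAt_posRoot hu).comp h hexp).congr_deriv ?_
  have hq0 := posRoot_pos hu
  have hq1 := posRoot_lt_one hu.le
  exact div_mul_eq_of_sq_add_mul_eq (posRoot_sq_add_mul hu.le) (by positivity) (by linarith)
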